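/- Let n ≥ 2 and let S_n(Sym_n) be the monoid presented by generators x_1,…,x_n and relations x_{σ(1)}x_{σ(2)}⋯x_{σ(n)} = x_1x_2⋯x_n for all σ ∈ Sym_n. Then for any two words u, v in the free monoid on x_1,…,x_n whose letters all lie in {x_2,…,x_n} and which are rearrangements of each other (i.e., every generator occurs in u and in v the same number of times), the identity x_ε·u = x_ε·v holds in S_n(Sym_n), where x_ε = x_1x_2⋯x_n. -/

import Mathlib

/-- The word `x_{σ(1)} x_{σ(2)} ⋯ x_{σ(n)}` in the free monoid on `n` generators
(generator `x_j` is indexed by `j-1 : Fin n`). -/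
def permWord {n : ℕ} (σ : Equiv.Perm (Fin n)) : FreeMonoid (Fin n) :=
  FreeMonoid.ofList (List.ofFn fun i => σ i)

/-- The word `x_ε = x_1 x_2 ⋯ x_n`. -/
def epsWord (n : ℕ) : FreeMonoid (Fin n) :=
  FreeMonoid.ofList (List.ofFn fun i : Fin n => i)

/-- The defining relations `x_{σ(1)} ⋯ x_{σ(n)} = x_1 ⋯ x_n`, `σ ∈ Sym_n`. -/
def symRel (n : ℕ) : FreeMonoid (Fin n) → FreeMonoid (Fin n) → Prop :=
  fun a b => ∃ σ : Equiv.Perm (Fin n), a = permWord σ ∧ b = epsWord n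

/-- The canonical projection from the free monoid onto `S_n(Sym_n)`. -/
def proj (n : ℕ) : FreeMonoid (Fin n) →* PresentedMonoid (symRel n) :=
  PresentedMonoid.mk (symRel n)

/-- `u` contains a subword of the form `x_{σ(1)} ⋯ x_{σ(n)}` for some `σ ∈ Sym_n`. -/
def HasPermSubword {n : ℕ} (u : FreeMonoid (Fin n)) : Prop :=
  ∃ (σ : Equiv.Perm (Fin n)) (a b : FreeMonoid (Fin n)), u = a * permWord σ * b

/-- The word `x_1^{m_1} · x_ε · x_2^{m_2} ⋯ x_n^{m_n}` (0-indexed: `m i` is the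
exponent of generator `i`). -/
def normalWord (n : ℕ) (h : 0 < n) (m : Fin n → ℕ) : FreeMonoid (Fin n) :=
  FreeMonoid.ofList (List.replicate (m ⟨0, h⟩) ⟨0, h⟩) * epsWord n *
    FreeMonoid.ofList (((List.finRange n).drop 1).flatMap fun i => List.replicate (m i) i)

/-! Every permutation word `x_{σ(1)} ⋯ x_{σ(n)}` equals `x_ε`, so `x_ε p = q x_ε` whenever `q r` and
`r p` are both permutations of the alphabet. Taking `p = q = x_a` shows that `x_ε` is central;
taking `p = x_a x_b`, `q = x_b x_a` with `a ≠ b` gives `x_ε x_a x_b = x_b x_a x_ε = x_ε x_b x_a`.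
Hence `x_ε w` only depends on the multiset of letters of `w`. -/

namespace SymPresentation

variable {n : ℕ}

open FreeMonoid

theorem proj_ofList_of_perm {l : List (Fin n)} (h : l.Perm (List.finRange n)) :
    proj n (ofList l) = proj n (epsWord n) := by
  have hlen : l.length = n := by simpa using h.length_eq
  let σ : Equiv.Perm (Fin n) := (finCongr hlen.symm).trans
    ((h.nodup_iff.mpr (List.nodup_finRange n)).getEquivOfForallMemList l
      fun x => h.mem_iff.mpr (List.mem_finRange x))
  have hσ : permWord σ = ofList l := by
    simp only [permWord, σ]
    congr 1
    exact List.ext_getElem (by simp [hlen]) (by simp)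
  exact hσ ▸ PresentedMonoid.mk_eq_mk_of_rel ⟨σ, rfl, rfl⟩

theorem proj_epsWord_mul_eq {p q r : List (Fin n)} (hqr : (q ++ r).Perm (List.finRange n))
    (hrp : (r ++ p).Perm (List.finRange n)) :
    proj n (epsWord n) * proj n (ofList p) = proj n (ofList q) * proj n (epsWord n) :=
  calc proj n (epsWord n) * proj n (ofList p)
      = proj n (ofList (q ++ r)) * proj n (ofList p) := by rw [proj_ofList_of_perm hqr]
    _ = proj n (ofList q) * proj n (ofList (r ++ p)) := by
      simp only [ofList_append, map_mul, mul_assoc]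
    _ = proj n (ofList q) * proj n (epsWord n) := by rw [proj_ofList_of_perm hrp]

theorem commute_proj_epsWord_of (a : Fin n) :
    Commute (proj n (epsWord n)) (proj n (of a)) :=
  proj_epsWord_mul_eq (p := [a]) (q := [a]) (r := (List.finRange n).erase a)
    (List.perm_cons_erase (List.mem_finRange a)).symm
    (List.perm_append_comm.trans (List.perm_cons_erase (List.mem_finRange a)).symm)

theorem proj_epsWord_mul_swap (a b : Fin n) :
    proj n (epsWord n) * proj n (of a * of b) = proj n (epsWord n) * proj n (of b * of a) := by
  obtain rfl | hab := eq_or_ne a b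
  · rfl
  have hb : b ∈ (List.finRange n).erase a := (List.mem_erase_of_ne hab.symm).mpr (by simp)
  have hperm : (b :: a :: ((List.finRange n).erase a).erase b).Perm (List.finRange n) :=
    ((List.perm_cons_erase hb).cons a |>.trans (.swap b a _)).symm.trans
      (List.perm_cons_erase (List.mem_finRange a)).symm
  have hswap := proj_epsWord_mul_eq (p := [a, b]) (q := [b, a]) hperm
    (List.perm_append_comm.trans ((List.Perm.swap b a _).trans hperm))
  have hcomm : Commute (proj n (epsWord n)) (proj n (of b * of a)) := by
    rw [map_mul]
    exact (commute_proj_epsWord_of b).mul_right (commute_proj_epsWord_of a)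
  exact hswap.trans hcomm.eq.symm

theorem proj_epsWord_mul_eq_of_perm {u v : List (Fin n)} (h : u.Perm v) :
    proj n (epsWord n) * proj n (ofList u) = proj n (epsWord n) * proj n (ofList v) := by
  induction h with
  | nil => rfl
  | cons x _ ih =>
    simp only [ofList_cons, map_mul]
    rw [(commute_proj_epsWord_of x).left_comm, ih, (commute_proj_epsWord_of x).left_comm]
  | swap x y l =>
    simpa only [ofList_cons, map_mul, mul_assoc] using
      congrArg (· * proj n (ofList l)) (proj_epsWord_mul_swap y x)
  | trans _ _ ih₁ ih₂ => exact ih₁.trans ih₂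

end SymPresentation

theorem eps_mul_rearrangement_general (n : ℕ) (u v : List (Fin n))
    (hcount : ∀ i : Fin n, u.count i = v.count i) :
    proj n (epsWord n) * proj n (FreeMonoid.ofList u) =
      proj n (epsWord n) * proj n (FreeMonoid.ofList v) :=
  SymPresentation.proj_epsWord_mul_eq_of_perm (List.perm_iff_count.mpr hcount)

/-- If `u` and `v` are words in the generators `x_2, …, x_n` (0-indexed: letters ≠ 0) that are
rearrangements of each other (each generator occurs the same number of times in both), then
`x_ε · u = x_ε · v` holds in `S_n(Sym_n)`. -/
theorem eps_mul_rearrangement (n : ℕ) (hn : 2 ≤ n) (u v : List (Fin n))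
    (hu : ∀ a ∈ u, a.val ≠ 0) (hv : ∀ a ∈ v, a.val ≠ 0)
    (hcount : ∀ i : Fin n, u.count i = v.count i) :
    proj n (epsWord n) * proj n (FreeMonoid.ofList u) =
      proj n (epsWord n) * proj n (FreeMonoid.ofList v) :=
  eps_mul_rearrangement_general n u v hcount
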